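/- Let F ⊆ E be an extension of differential fields of characteristic zero with derivation δ (write a' := δ(a)), and extend δ to E[[x]] coefficientwise. Let a ∈ E with a' ≠ 0 and let m ∈ ℤ_{≥0}. Suppose there exist c_0,…,c_m ∈ F, not all zero, and a polynomial f ∈ F[x] such that c_0 [e^{ax}]_{2(m+1)} + c_1 [δ(e^{ax})]_{2(m+1)} + … + c_m [δ^m(e^{ax})]_{2(m+1)} = f, where e^{ax} := Σ_{n≥0} a^n x^n / n! ∈ E[[x]] and [g]_N denotes the polynomial obtained from g ∈ E[[x]] by keeping only the coefficients of x^k for 0 ≤ k ≤ N. Then a ∈ F. -/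

import Mathlib

/-- The exponential power series `e^{ax} = Σ_{n ≥ 0} aⁿ xⁿ / n!` in `E⟦X⟧`
(for `E` of characteristic zero). -/
noncomputable def expSeries' {E : Type*} [Field E] [CharZero E] (a : E) : PowerSeries E :=
  PowerSeries.mk fun n => a ^ n / (n.factorial : E)

/-- The coefficientwise extension of a map `d : E → E` to `E⟦X⟧`:
`δ(Σ cᵢ xⁱ) = Σ δ(cᵢ) xⁱ`. -/
noncomputable def coeffWiseMap {E : Type*} [Field E] (d : E → E) (f : PowerSeries E) :
    PowerSeries E :=
  PowerSeries.mk fun n => d (PowerSeries.coeff n f)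

/-- The truncation `[g]_N` of a power series, keeping the coefficients of `x^k`
for `0 ≤ k ≤ N` (Mathlib's `trunc (N + 1)` keeps degrees `< N + 1`). -/
noncomputable def truncAt {E : Type*} [Field E] (N : ℕ) (g : PowerSeries E) : Polynomial E :=
  PowerSeries.trunc (N + 1) g

/-!
Put `w n = ∑ᵢ cᵢ δⁱ(aⁿ)`. Comparing the coefficients of `xⁿ` gives `w n = n! fₙ ∈ F` for
`n ≤ 2(m + 1)`. Since `δ(aⁿ) = n (δa / a) aⁿ`, induction gives `δⁱ(aⁿ) = Qᵢ(n) aⁿ` with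
`deg Qᵢ = i`, so `w n = P(n) aⁿ` for a nonzero polynomial `P` of degree `d ≤ m`.

Such a sequence satisfies the linear recurrence with characteristic polynomial `(X - a)^(d+1)`,
and its Hankel matrix `(w (r + s))_{r, s ≤ d}` is nonsingular, because the translates
`P(X + s)`, `s ≤ d`, are linearly independent. Hence the recurrence coefficients are the unique
solution of a linear system with entries in `F`, so they lie in `F`; one of them is `(d + 1) a`.
-/

open Polynomial Finset Matrix

theorem Polynomial.linearIndependent_of_degree_eq {R : Type*} [Ring R] [IsDomain R] {n : ℕ}
    {Q : Fin n → R[X]} (hQ : ∀ i, (Q i).degree = i) : LinearIndependent R Q := by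
  classical
  let S : Sequence R := ⟨fun i => if h : i < n then Q ⟨i, h⟩ else X ^ i, fun i => by
    split_ifs with h
    · exact hQ _
    · exact degree_X_pow i⟩
  convert S.linearIndependent.comp _ Fin.val_injective
  ext1 i
  simp [S]

theorem Polynomial.taylor_eq_sum_pow_smul_hasseDeriv {R : Type*} [CommRing R] [IsDomain R]
    [Infinite R] (r : R) (f : R[X]) :
    taylor r f = ∑ k : Fin (f.natDegree + 1), r ^ (k : ℕ) • hasseDeriv k f := by
  refine Polynomial.funext fun s => ?_
  rw [taylor_eval, add_comm, ← taylor_eval, eval_eq_sum_range, natDegree_taylor, eval_finsetSum,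
    ← Fin.sum_univ_eq_sum_range]
  simp [taylor_coeff, mul_comm]

theorem Polynomial.linearIndependent_hasseDeriv {K : Type*} [Field K] [CharZero K] {P : K[X]}
    (hP : P ≠ 0) : LinearIndependent K fun k : Fin (P.natDegree + 1) => hasseDeriv k P := by
  have hrev : LinearIndependent K fun i : Fin (P.natDegree + 1) =>
      hasseDeriv (P.natDegree - i) P := by
    refine linearIndependent_of_degree_eq fun i => degree_eq_of_le_of_coeff_ne_zero
      (degree_le_of_natDegree_le ((natDegree_hasseDeriv_le _ _).trans_eq
        (Nat.sub_sub_self (Nat.le_of_lt_succ i.2)))) ?_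
    rw [hasseDeriv_coeff, Nat.add_sub_cancel' (Nat.le_of_lt_succ i.2)]
    exact mul_ne_zero (Nat.cast_ne_zero.2 (Nat.choose_pos (Nat.sub_le _ _)).ne')
      (leadingCoeff_ne_zero.2 hP)
  convert hrev.comp Fin.rev Fin.rev_injective with k
  simp only [Function.comp_apply, Fin.val_rev]
  congr 2
  have := k.2
  omega

theorem Polynomial.linearIndependent_taylor_natCast {K : Type*} [Field K] [CharZero K]
    {P : K[X]} (hP : P ≠ 0) :
    LinearIndependent K fun y : Fin (P.natDegree + 1) => taylor (y : K) P := by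
  rw [Fintype.linearIndependent_iff]
  intro v hv
  have hmoments : ∀ k : Fin (P.natDegree + 1), ∑ y, v y * (y : K) ^ (k : ℕ) = 0 := by
    refine Fintype.linearIndependent_iff.1 (linearIndependent_hasseDeriv hP) _ ?_
    rw [← hv]
    simp only [taylor_eq_sum_pow_smul_hasseDeriv, Finset.smul_sum, Finset.sum_smul, smul_smul]
    exact Finset.sum_comm
  exact congrFun (Matrix.eq_zero_of_forall_pow_sum_mul_pow_eq_zero
    (f := fun y : Fin (P.natDegree + 1) => (y : K))
    (fun y z h => Fin.ext (Nat.cast_injective h)) hmoments)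

theorem Polynomial.det_of_eval_natCast_add_ne_zero {K : Type*} [Field K] [CharZero K] {P : K[X]}
    (hP : P ≠ 0) :
    (Matrix.of fun r y : Fin (P.natDegree + 1) => P.eval ((r + y : ℕ) : K)).det ≠ 0 := by
  rw [Ne, ← Matrix.exists_mulVec_eq_zero_iff]
  rintro ⟨v, hv0, hv⟩
  refine hv0 (_root_.funext <|
    Fintype.linearIndependent_iff.1 (linearIndependent_taylor_natCast hP) v ?_)
  refine eq_zero_of_natDegree_lt_card_of_eval_eq_zero _
    (f := fun r : Fin (P.natDegree + 1) => (r : K)) (fun r s h => Fin.ext (Nat.cast_injective h))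
    (fun r => ?_) ?_
  · simpa [Matrix.mulVec, dotProduct, taylor_eval, eval_finsetSum, mul_comm, add_comm]
      using congrFun hv r
  · rw [Fintype.card_fin, Nat.lt_succ_iff]
    refine natDegree_sum_le_of_forall_le _ _ fun y _ => ?_
    exact (natDegree_smul_le _ _).trans (natDegree_taylor P _).le

theorem Polynomial.det_of_eval_mul_pow_ne_zero {K : Type*} [Field K] [CharZero K] {P : K[X]}
    (hP : P ≠ 0) {a : K} (ha : a ≠ 0) :
    (Matrix.of fun r y : Fin (P.natDegree + 1) =>
      P.eval ((r + y : ℕ) : K) * a ^ (r + y : ℕ)).det ≠ 0 := by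
  have hscale : (Matrix.of fun r y : Fin (P.natDegree + 1) =>
      P.eval ((r + y : ℕ) : K) * a ^ (r + y : ℕ)) =
      Matrix.diagonal (fun r : Fin (P.natDegree + 1) => a ^ (r : ℕ)) *
        Matrix.of (fun r y : Fin (P.natDegree + 1) => P.eval ((r + y : ℕ) : K)) *
        Matrix.diagonal (fun y : Fin (P.natDegree + 1) => a ^ (y : ℕ)) := by
    ext r y
    simp only [Nat.cast_add, pow_add, of_apply, mul_diagonal, diagonal_mul]
    ring
  have hdiag : ∏ r : Fin (P.natDegree + 1), a ^ (r : ℕ) ≠ 0 :=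
    prod_ne_zero_iff.2 fun r _ => pow_ne_zero _ ha
  rw [hscale, Matrix.det_mul, Matrix.det_mul, Matrix.det_diagonal]
  exact mul_ne_zero (mul_ne_zero hdiag (det_of_eval_natCast_add_ne_zero hP)) hdiag

/-- `n ↦ P(n) aⁿ` is killed by `(S - a)^N`, `S` the shift, because `Δ^N P = 0`. -/
theorem Polynomial.sum_choose_mul_eval_mul_pow_eq_zero {R : Type*} [CommRing R] {P : R[X]}
    {N : ℕ} (hP : P.natDegree < N) (a : R) (r : ℕ) :
    ∑ k ∈ range (N + 1), (-1) ^ (N - k) * N.choose k * a ^ (N - k) *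
      (P.eval ((r + k : ℕ) : R) * a ^ (r + k)) = 0 := by
  have h := congrFun (fwdDiff_iter_eq_zero_of_degree_lt hP) (r : R)
  rw [fwdDiff_iter_eq_sum_shift] at h
  calc _ = a ^ (r + N) * ∑ k ∈ range (N + 1),
        ((-1 : ℤ) ^ (N - k) * N.choose k) • P.eval ((r : R) + k • 1) := by
        rw [mul_sum]
        refine sum_congr rfl fun k hk => ?_
        have hpow : a ^ (N - k) * a ^ (r + k) = a ^ (r + N) := by
          rw [← pow_add]
          congr 1
          have := mem_range.1 hk
          omega
        rw [zsmul_eq_mul, nsmul_one, ← hpow]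
        push_cast
        ring
    _ = 0 := by rw [h, Pi.zero_apply, mul_zero]

theorem Subfield.mem_of_mulVec_eq {E : Type*} [Field E] (F : Subfield E) {n : Type*} [Fintype n]
    [DecidableEq n] {A : Matrix n n E} {b x : n → E} (hA : ∀ i j, A i j ∈ F) (hb : ∀ i, b i ∈ F)
    (hdet : A.det ≠ 0) (hx : A *ᵥ x = b) (i : n) : x i ∈ F := by
  set A' : Matrix n n F := Matrix.of fun i j => ⟨A i j, hA i j⟩
  set b' : n → F := fun i => ⟨b i, hb i⟩
  have hmap : F.subtype.mapMatrix A' = A := rfl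
  have hdet' : IsUnit A'.det := isUnit_iff_ne_zero.2 fun h => hdet <| by
    rw [← hmap, ← RingHom.map_det, h, map_zero]
  set y := A'⁻¹ *ᵥ b'
  have hy : A' *ᵥ y = b' := by
    rw [Matrix.mulVec_mulVec, Matrix.mul_nonsing_inv _ hdet', Matrix.one_mulVec]
  have hAy : A *ᵥ (F.subtype ∘ y) = b := funext fun j => by
    rw [← hmap]
    exact (RingHom.map_mulVec F.subtype A' y j).symm.trans (congrArg _ (congrFun hy j))
  have hinj : Function.Injective A.mulVec :=
    Matrix.mulVec_injective_iff_isUnit.2 (A.isUnit_iff_isUnit_det.2 (isUnit_iff_ne_zero.2 hdet))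
  rw [hinj (hx.trans hAy.symm)]
  exact (y i).2

theorem Subfield.mem_of_eval_mul_pow_mem {E : Type*} [Field E] [CharZero E] (F : Subfield E)
    {P : E[X]} (hP : P ≠ 0) {a : E} (h : ∀ n ≤ 2 * P.natDegree + 1, P.eval (n : E) * a ^ n ∈ F) :
    a ∈ F := by
  rcases eq_or_ne a 0 with rfl | ha
  · exact F.zero_mem
  set d := P.natDegree
  set w : ℕ → E := fun n => P.eval (n : E) * a ^ n
  set H : Matrix (Fin (d + 1)) (Fin (d + 1)) E := Matrix.of fun r y => w (r + y)
  -- `x y` is minus the coefficient of `X ^ y` in `(X - a) ^ (d + 1)`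
  -- `x y` is minus the coefficient of `X ^ y` in `(X - a) ^ (d + 1)`
  set x : Fin (d + 1) → E := fun y => -((-1) ^ (d + 1 - y) * (d + 1).choose y * a ^ (d + 1 - y))
  have hsol : H *ᵥ x = fun r : Fin (d + 1) => w (r + (d + 1)) := by
    ext r
    have hrec := sum_choose_mul_eval_mul_pow_eq_zero (lt_add_one d) a r
    rw [sum_range_succ, ← Fin.sum_univ_eq_sum_range, sum_congr rfl fun _ _ => mul_comm _ _,
      Nat.sub_self, Nat.choose_self] at hrec
    simp only [Matrix.mulVec, dotProduct, H, w, x, Matrix.of_apply, mul_neg, sum_neg_distrib]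
    linear_combination -hrec
  have hdet : H.det ≠ 0 := det_of_eval_mul_pow_ne_zero hP ha
  have hx := F.mem_of_mulVec_eq (fun r y => h _ (by omega)) (fun r => h _ (by omega)) hdet hsol
    (Fin.last d)
  have hlast : x (Fin.last d) = (d + 1 : ℕ) * a := by
    simp only [x, Fin.val_last, add_tsub_cancel_left, pow_one, Nat.choose_succ_self_right,
      Nat.cast_add, Nat.cast_one, neg_mul, one_mul, neg_add_rev]
    ring
  rw [hlast] at hx
  rw [← inv_mul_cancel_left₀ (Nat.cast_ne_zero.2 d.succ_ne_zero) a]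
  exact F.mul_mem (F.inv_mem (natCast_mem F _)) hx

namespace Differential

variable {E : Type*} [Field E] [Differential E]

theorem deriv_eval_natCast (Q : E[X]) (n : ℕ) :
    (Q.eval (n : E))′ = (mapCoeffs Q).eval (n : E) := by
  simpa [coe_aeval_eq_eval] using deriv_aeval_eq (n : E) Q

theorem natDegree_mapCoeffs_le (Q : E[X]) : (mapCoeffs Q).natDegree ≤ Q.natDegree :=
  natDegree_le_iff_coeff_eq_zero.2 fun k hk => by
    rw [coeff_mapCoeffs, coeff_eq_zero_of_natDegree_lt hk, map_zero]

theorem deriv_pow_eq_mul_logDeriv {a : E} (ha : a ≠ 0) (n : ℕ) :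
    (a ^ n)′ = n * logDeriv a * a ^ n := by
  rw [← Differential.logDeriv_pow, Differential.logDeriv, div_mul_cancel₀ _ (pow_ne_zero n ha)]

theorem iterate_deriv_div_natCast (i n : ℕ) (x : E) :
    (⇑Differential.deriv)^[i] (x / n) = (⇑Differential.deriv)^[i] x / n := by
  induction i generalizing x with
  | zero => rfl
  | succ i ih =>
    rw [Function.iterate_succ_apply', ih, Function.iterate_succ_apply',
      Derivation.leibniz_div_const _ _ _ (Derivation.map_natCast _ n), smul_eq_mul, inv_mul_eq_div]

theorem exists_iterate_deriv_pow_eq {a : E} (ha : a ≠ 0) (i : ℕ) :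
    ∃ Q : E[X], Q.natDegree ≤ i ∧ Q.coeff i = logDeriv a ^ i ∧
      ∀ n : ℕ, (⇑Differential.deriv)^[i] (a ^ n) = Q.eval (n : E) * a ^ n := by
  induction i with
  | zero => exact ⟨1, by simp, by simp, by simp⟩
  | succ i ih =>
    obtain ⟨Q, hdeg, hcoeff, hQ⟩ := ih
    refine ⟨mapCoeffs Q + C (logDeriv a) * (X * Q), ?_, ?_, fun n => ?_⟩
    · refine (natDegree_add_le _ _).trans (max_le ((natDegree_mapCoeffs_le Q).trans (by omega)) ?_)
      grw [natDegree_C_mul_le, natDegree_mul_le, natDegree_X_le, hdeg]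
      omega
    · rw [coeff_add, coeff_mapCoeffs, coeff_eq_zero_of_natDegree_lt (by omega), map_zero,
        coeff_C_mul, coeff_X_mul, hcoeff, zero_add, pow_succ']
    · rw [Function.iterate_succ_apply', hQ, Derivation.leibniz, deriv_eval_natCast,
        deriv_pow_eq_mul_logDeriv ha]
      simp only [smul_eq_mul, eval_add, eval_mul, eval_C, eval_X]
      ring

theorem exists_sum_iterate_deriv_pow_eq {a : E} (ha : a′ ≠ 0) {m : ℕ} {c : ℕ → E}
    (hc : ∃ i ≤ m, c i ≠ 0) :
    ∃ P : E[X], P ≠ 0 ∧ P.natDegree ≤ m ∧ ∀ n : ℕ,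
      ∑ i ∈ range (m + 1), c i * (⇑Differential.deriv)^[i] (a ^ n) = P.eval (n : E) * a ^ n := by
  have ha0 : a ≠ 0 := by
    rintro rfl
    exact ha (map_zero _)
  choose Q hdeg hcoeff hQ using exists_iterate_deriv_pow_eq ha0
  have hdegree (i : ℕ) : (Q i).degree = i := by
    refine degree_eq_of_le_of_coeff_ne_zero (degree_le_of_natDegree_le (hdeg i)) ?_
    rw [hcoeff]
    exact pow_ne_zero _ ((logDeriv_eq_zero a).not.2 ha)
  refine ⟨∑ i : Fin (m + 1), c i • Q i, fun hP => ?_, ?_, fun n => ?_⟩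
  · obtain ⟨i, hi, hci⟩ := hc
    exact hci <| Fintype.linearIndependent_iff.1
      (linearIndependent_of_degree_eq fun i : Fin (m + 1) => hdegree i) _ hP ⟨i, by omega⟩
  · exact natDegree_sum_le_of_forall_le _ _ fun i _ =>
      (natDegree_smul_le _ _).trans ((hdeg i).trans (Nat.le_of_lt_succ i.2))
  · rw [eval_finsetSum, sum_mul, ← Fin.sum_univ_eq_sum_range]
    simp [hQ, mul_assoc]

end Differential

theorem coeff_iterate_coeffWiseMap {E : Type*} [Field E] (d : E → E) (g : PowerSeries E)
    (i n : ℕ) : PowerSeries.coeff n ((coeffWiseMap d)^[i] g) = d^[i] (PowerSeries.coeff n g) := by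
  induction i generalizing g with
  | zero => rfl
  | succ i ih => simp [Function.iterate_succ_apply, ih, coeffWiseMap]

theorem coeff_truncAt {E : Type*} [Field E] {N n : ℕ} (h : n ≤ N) (g : PowerSeries E) :
    (truncAt N g).coeff n = PowerSeries.coeff n g := by
  rw [truncAt, PowerSeries.coeff_trunc, if_pos (Nat.lt_succ_of_le h)]

theorem coeff_expSeries' {E : Type*} [Field E] [CharZero E] (a : E) (n : ℕ) :
    PowerSeries.coeff n (expSeries' a) = a ^ n / n.factorial := by
  simp [expSeries']

theorem core_lemma_differential_general
    {E : Type*} [Field E] [CharZero E] (F : Subfield E)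
    (δ : E → E)
    (hadd : ∀ x y : E, δ (x + y) = δ x + δ y)
    (hleib : ∀ x y : E, δ (x * y) = δ x * y + x * δ y)
    (a : E) (ha : δ a ≠ 0) (m : ℕ)
    (c : ℕ → E) (hc0 : ∃ i ≤ m, c i ≠ 0)
    (f : Polynomial E) (hfF : ∀ k, f.coeff k ∈ F)
    (hcomb : ∑ i ∈ Finset.range (m + 1),
        Polynomial.C (c i) * truncAt (2 * (m + 1)) ((coeffWiseMap δ)^[i] (expSeries' a)) = f) :
    a ∈ F := by
  let _ : Differential E := ⟨Derivation.mk' (AddMonoidHom.mk' δ hadd).toIntLinearMap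
    fun x y => by simp [hleib, smul_eq_mul]; ring⟩
  have hδ : ⇑(Differential.deriv : Derivation ℤ E E) = δ := rfl
  have hw (n : ℕ) (hn : n ≤ 2 * (m + 1)) :
      ∑ i ∈ range (m + 1), c i * δ^[i] (a ^ n) = n.factorial * f.coeff n := by
    rw [← hcomb, finsetSum_coeff, mul_sum]
    refine sum_congr rfl fun i _ => ?_
    rw [coeff_C_mul, coeff_truncAt hn, coeff_iterate_coeffWiseMap, coeff_expSeries', ← hδ,
      Differential.iterate_deriv_div_natCast, mul_div_assoc',
      mul_div_cancel₀ _ (Nat.cast_ne_zero.2 n.factorial_ne_zero)]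
  obtain ⟨P, hP0, hPm, hP⟩ := Differential.exists_sum_iterate_deriv_pow_eq (a := a) ha hc0
  refine F.mem_of_eval_mul_pow_mem hP0 fun n hn => ?_
  rw [← hP, hδ, hw n (by omega)]
  exact F.mul_mem (natCast_mem F _) (hfF n)

/-- **Core lemma for differential fields.**  Let `F ⊆ E` be an extension of differential
fields of characteristic zero with derivation `δ`, extended coefficientwise to `E⟦X⟧`.
Let `a ∈ E` with `δ a ≠ 0`.  If some nontrivial `F`-linear combination of the truncations
`[δ^i(e^{ax})]_{2(m+1)}`, `0 ≤ i ≤ m`, is a polynomial with all coefficients in `F`,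
then `a ∈ F`. -/
theorem core_lemma_differential
    {E : Type*} [Field E] [CharZero E] (F : Subfield E)
    (δ : E → E)
    (hadd : ∀ x y : E, δ (x + y) = δ x + δ y)
    (hleib : ∀ x y : E, δ (x * y) = δ x * y + x * δ y)
    (hFδ : ∀ x ∈ F, δ x ∈ F)
    (a : E) (ha : δ a ≠ 0) (m : ℕ)
    (c : ℕ → E) (hcF : ∀ i ≤ m, c i ∈ F) (hc0 : ∃ i ≤ m, c i ≠ 0)
    (f : Polynomial E) (hfF : ∀ k, f.coeff k ∈ F)
    (hcomb : ∑ i ∈ Finset.range (m + 1),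
        Polynomial.C (c i) * truncAt (2 * (m + 1)) ((coeffWiseMap δ)^[i] (expSeries' a)) = f) :
    a ∈ F :=
  core_lemma_differential_general F δ hadd hleib a ha m c hc0 f hfF hcomb
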